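/- Let B₃ be the group with presentation ⟨x, y ∥ x y x = y x y⟩ (the braid group on 3 strands, i.e. the presented group on two generators with the single relator x y x (y x y)⁻¹). Then the commutator subgroup of B₃ is isomorphic to the free group of rank 2. -/

import Mathlib

/-!
`B₃` is isomorphic to `F₂ ⋊ ℤ`, where the generator of `ℤ` acts on the free basis `a, b` by
`a ↦ b`, `b ↦ a⁻¹ b` (the monodromy of the trefoil, a fibred knot with fibre a punctured torus):
send `σ₁ ↦ t` and `σ₂ ↦ a t`, and back `a ↦ σ₂ σ₁⁻¹`, `b ↦ σ₁ σ₂ σ₁⁻²`, `t ↦ σ₁`.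
Since `ℤ` is abelian, the commutator subgroup of `F₂ ⋊ ℤ` lies in `F₂`; conversely the commutators
`⁅t, n⁆ = (t • n) n⁻¹` give `a⁻¹` and `b a⁻¹`, so it is all of `F₂`.
-/

/-- The single braid relator `x y x (y x y)⁻¹` in the free group on two generators. -/
def braidRel3 : FreeGroup (Fin 2) :=
  FreeGroup.of 0 * FreeGroup.of 1 * FreeGroup.of 0 *
    (FreeGroup.of 1 * FreeGroup.of 0 * FreeGroup.of 1)⁻¹

/-- The braid group on 3 strands `B₃ = ⟨x, y ∥ x y x = y x y⟩`. -/
def BraidGroup3 : Type := PresentedGroup ({braidRel3} : Set (FreeGroup (Fin 2)))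

instance : Group BraidGroup3 := by unfold BraidGroup3; infer_instance

theorem Function.Semiconj.mulAut_zpow {M N : Type*} [Mul M] [Mul N] {f : M → N}
    {e : MulAut M} {τ : MulAut N} (h : Function.Semiconj f e τ) (k : ℤ) :
    Function.Semiconj f ⇑(e ^ k) ⇑(τ ^ k) := by
  induction k using Int.induction_on with
  | zero => exact Function.Semiconj.id_right
  | succ k ih => simpa only [zpow_add_one, MulAut.coe_mul] using ih.comp_right h
  | pred k ih =>
    have h_inv : Function.Semiconj f ⇑e⁻¹ ⇑τ⁻¹ :=
      h.inverses_right e.apply_symm_apply τ.symm_apply_apply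
    simpa only [zpow_sub_one, MulAut.coe_mul] using ih.comp_right h_inv

theorem map_commutator_of_surjective {G H : Type*} [Group G] [Group H] {f : G →* H}
    (hf : Function.Surjective f) : (commutator G).map f = commutator H := by
  rw [map_commutator_eq, MonoidHom.range_eq_top.2 hf, commutator_def]

namespace SemidirectProduct

open scoped commutatorElement

variable {N G : Type*} [Group N] [Group G] {φ : G →* MulAut N}

theorem commutatorElement_inr_inl (g : G) (n : N) :
    ⁅(inr g : N ⋊[φ] G), (inl n : N ⋊[φ] G)⁆ = inl (φ g n * n⁻¹) := by
  rw [commutatorElement_def, map_mul, inl_aut, map_inv, map_inv]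

theorem inl_mem_commutator (g : G) (n : N) : inl (φ g n * n⁻¹) ∈ commutator (N ⋊[φ] G) := by
  rw [← commutatorElement_inr_inl]
  exact Subgroup.commutator_mem_commutator (Subgroup.mem_top _) (Subgroup.mem_top _)

theorem commutator_le_range_inl {G : Type*} [CommGroup G] {φ : G →* MulAut N} :
    commutator (N ⋊[φ] G) ≤ inl.range := by
  rw [range_inl_eq_ker_rightHom]
  exact Abelianization.commutator_subset_ker _

end SemidirectProduct

namespace BraidGroup3

open FreeGroup (of)
open SemidirectProduct

noncomputable abbrev σ₁ : BraidGroup3 := PresentedGroup.of 0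
noncomputable abbrev σ₂ : BraidGroup3 := PresentedGroup.of 1

theorem braid_rel : σ₁ * σ₂ * σ₁ = σ₂ * σ₁ * σ₂ :=
  PresentedGroup.mk_eq_mk_of_mul_inv_mem (rels := {braidRel3}) rfl

def monodromy : MulAut (FreeGroup (Fin 2)) :=
  MonoidHom.toMulEquiv (FreeGroup.lift ![of 1, (of 0)⁻¹ * of 1])
    (FreeGroup.lift ![of 0 * (of 1)⁻¹, of 0])
    (by ext i; fin_cases i <;> simp) (by ext i; fin_cases i <;> simp)

@[simp] theorem monodromy_of_zero : monodromy (of 0) = of 1 := by simp [monodromy]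
@[simp] theorem monodromy_of_one : monodromy (of 1) = (of 0)⁻¹ * of 1 := by simp [monodromy]

abbrev FreeByCyclic : Type :=
  FreeGroup (Fin 2) ⋊[zpowersHom _ monodromy] Multiplicative ℤ

theorem commutator_freeByCyclic : commutator FreeByCyclic = inl.range := by
  refine le_antisymm commutator_le_range_inl ?_
  rw [MonoidHom.range_eq_map, ← FreeGroup.closure_range_of, MonoidHom.map_closure,
    Subgroup.closure_le]
  rintro _ ⟨_, ⟨i, rfl⟩, rfl⟩
  have h₀ : inl (of 0) ∈ commutator FreeByCyclic := by
    simpa using inv_mem (inl_mem_commutator (φ := zpowersHom _ monodromy) (.ofAdd 1) (of 1))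
  fin_cases i
  · exact h₀
  · simpa using mul_mem (inl_mem_commutator (φ := zpowersHom _ monodromy) (.ofAdd 1) (of 0)) h₀

noncomputable def toFreeByCyclic : BraidGroup3 →* FreeByCyclic :=
  PresentedGroup.toGroup (f := ![inr (.ofAdd 1), inl (of 0) * inr (.ofAdd 1)]) <| by
    rintro _ rfl
    simp only [braidRel3, map_mul, map_inv, FreeGroup.lift_apply_of, mul_inv_eq_one]
    -- both sides of the braid relation are `⟨b, t³⟩`
    ext <;> simp [mul_left, mul_right, pow_two, ← ofAdd_add]

@[simp] theorem toFreeByCyclic_σ₁ : toFreeByCyclic σ₁ = inr (.ofAdd 1) :=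
  PresentedGroup.toGroup.of _
@[simp] theorem toFreeByCyclic_σ₂ : toFreeByCyclic σ₂ = inl (of 0) * inr (.ofAdd 1) :=
  PresentedGroup.toGroup.of _

noncomputable def ofFreeGroup : FreeGroup (Fin 2) →* BraidGroup3 :=
  FreeGroup.lift ![σ₂ * σ₁⁻¹, σ₁ * σ₂ * σ₁⁻¹ * σ₁⁻¹]

@[simp] theorem ofFreeGroup_of_zero : ofFreeGroup (of 0) = σ₂ * σ₁⁻¹ := by simp [ofFreeGroup]
@[simp] theorem ofFreeGroup_of_one : ofFreeGroup (of 1) = σ₁ * σ₂ * σ₁⁻¹ * σ₁⁻¹ := by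
  simp [ofFreeGroup]

theorem ofFreeGroup_monodromy (n : FreeGroup (Fin 2)) :
    ofFreeGroup (monodromy n) = MulAut.conj σ₁ (ofFreeGroup n) := by
  suffices h : ofFreeGroup.comp monodromy.toMonoidHom =
      (MulAut.conj σ₁).toMonoidHom.comp ofFreeGroup from DFunLike.congr_fun h n
  refine FreeGroup.ext_hom _ _ fun i => ?_
  fin_cases i
  · show ofFreeGroup (monodromy (of 0)) = σ₁ * ofFreeGroup (of 0) * σ₁⁻¹
    rw [monodromy_of_zero, ofFreeGroup_of_zero, ofFreeGroup_of_one]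
    group
  · show ofFreeGroup (monodromy (of 1)) = σ₁ * ofFreeGroup (of 1) * σ₁⁻¹
    simp only [monodromy_of_one, map_mul, map_inv, ofFreeGroup_of_zero, ofFreeGroup_of_one]
    calc (σ₂ * σ₁⁻¹)⁻¹ * (σ₁ * σ₂ * σ₁⁻¹ * σ₁⁻¹)
        = σ₁ * σ₂⁻¹ * (σ₁ * σ₂ * σ₁) * σ₁⁻¹ ^ 3 := by group
      _ = σ₁ * σ₂⁻¹ * (σ₂ * σ₁ * σ₂) * σ₁⁻¹ ^ 3 := by rw [braid_rel]
      _ = σ₁ * (σ₁ * σ₂ * σ₁⁻¹ * σ₁⁻¹) * σ₁⁻¹ := by group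

noncomputable def ofFreeByCyclic : FreeByCyclic →* BraidGroup3 :=
  SemidirectProduct.lift ofFreeGroup (zpowersHom _ σ₁) fun g => by
    refine MonoidHom.ext fun n => ?_
    simpa [map_zpow] using Function.Semiconj.mulAut_zpow ofFreeGroup_monodromy g.toAdd n

@[simp] theorem ofFreeByCyclic_inl (n : FreeGroup (Fin 2)) :
    ofFreeByCyclic (inl n) = ofFreeGroup n := lift_inl ..
@[simp] theorem ofFreeByCyclic_inr (k : Multiplicative ℤ) :
    ofFreeByCyclic (inr k) = σ₁ ^ k.toAdd := lift_inr ..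

theorem ofFreeByCyclic_comp_toFreeByCyclic : ofFreeByCyclic.comp toFreeByCyclic = .id _ := by
  refine PresentedGroup.ext fun i => ?_
  fin_cases i
  · show ofFreeByCyclic (toFreeByCyclic σ₁) = σ₁
    simp
  · show ofFreeByCyclic (toFreeByCyclic σ₂) = σ₂
    simp

theorem toFreeByCyclic_comp_ofFreeByCyclic : toFreeByCyclic.comp ofFreeByCyclic = .id _ := by
  refine hom_ext (FreeGroup.ext_hom _ _ fun i => ?_) (MonoidHom.ext_mint ?_)
  · fin_cases i
    · show toFreeByCyclic (ofFreeGroup (of 0)) = inl (of 0)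
      simp
    · show toFreeByCyclic (ofFreeGroup (of 1)) = inl (of 1)
      simp only [ofFreeGroup_of_one, map_mul, map_inv, toFreeByCyclic_σ₁, toFreeByCyclic_σ₂]
      calc _ = (inr (.ofAdd 1) : FreeByCyclic) * inl (of 0) * (inr (.ofAdd 1))⁻¹ := by group
        _ = inl (of 1) := by rw [← map_inv, ← inl_aut]; simp
  · simp

noncomputable def mulEquivFreeByCyclic : BraidGroup3 ≃* FreeByCyclic :=
  toFreeByCyclic.toMulEquiv ofFreeByCyclic ofFreeByCyclic_comp_toFreeByCyclic
    toFreeByCyclic_comp_ofFreeByCyclic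

theorem map_commutator_mulEquivFreeByCyclic :
    (commutator BraidGroup3).map mulEquivFreeByCyclic.toMonoidHom = inl.range := by
  rw [map_commutator_of_surjective (f := mulEquivFreeByCyclic.toMonoidHom)
    mulEquivFreeByCyclic.surjective, commutator_freeByCyclic]

end BraidGroup3

/-- The commutator subgroup of the braid group `B₃ = ⟨x, y ∥ x y x = y x y⟩`
is isomorphic to the free group of rank `2`. -/
theorem stmt_3 :
    Nonempty ((commutator BraidGroup3) ≃* FreeGroup (Fin 2)) :=
  ⟨(BraidGroup3.mulEquivFreeByCyclic.subgroupMap _).trans <|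
    (MulEquiv.subgroupCongr BraidGroup3.map_commutator_mulEquivFreeByCyclic).trans
      (MonoidHom.ofInjective SemidirectProduct.inl_injective).symm⟩
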